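/- If θ = ⟨(μ_θ, ν_θ); r_θ⟩ is a D-IFV and ζ > 0 is a real number, then θ^{ζ_p} := ⟨(μ_θ^ζ, 1−(1−ν_θ)^ζ); √2 − √2(1 − r_θ/√2)^ζ⟩ is again a D-IFV; explicitly, μ_θ^ζ ∈ [0,1], 1−(1−ν_θ)^ζ ∈ [0,1], μ_θ^ζ + (1−(1−ν_θ)^ζ) ≤ 1, and √2 − √2(1 − r_θ/√2)^ζ ∈ [0,√2]. -/

import Mathlib

open Set Real

lemma rpow_mem_Icc_zero_one {x ζ : ℝ} (hx : x ∈ Icc (0:ℝ) 1) (hζ : 0 ≤ ζ) :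
    x ^ ζ ∈ Icc (0:ℝ) 1 :=
  ⟨rpow_nonneg hx.1 ζ, rpow_le_one hx.1 hx.2 hζ⟩

lemma one_sub_rpow_one_sub_mem_Icc {x ζ : ℝ} (hx : x ∈ Icc (0:ℝ) 1) (hζ : 0 ≤ ζ) :
    1 - (1 - x) ^ ζ ∈ Icc (0:ℝ) 1 :=
  Icc.mem_iff_one_sub_mem.mp (rpow_mem_Icc_zero_one (Icc.mem_iff_one_sub_mem.mp hx) hζ)

lemma rpow_add_one_sub_rpow_one_sub_le_one {μ ν ζ : ℝ} (hμ : 0 ≤ μ) (hμν : μ + ν ≤ 1)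
    (hζ : 0 ≤ ζ) : μ ^ ζ + (1 - (1 - ν) ^ ζ) ≤ 1 := by
  have hle : μ ^ ζ ≤ (1 - ν) ^ ζ := rpow_le_rpow hμ (by linarith) hζ
  linarith

lemma sub_mul_rpow_one_sub_div_mem_Icc {c r ζ : ℝ} (hc : 0 ≤ c) (hr : r ∈ Icc 0 c)
    (hζ : 0 ≤ ζ) : c - c * (1 - r / c) ^ ζ ∈ Icc 0 c := by
  obtain ⟨h0, h1⟩ := one_sub_rpow_one_sub_mem_Icc (unitInterval.div_mem hr.1 hc hr.2) hζ
  rw [← mul_one_sub]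
  exact ⟨mul_nonneg hc h0, mul_le_of_le_one_right hc h1⟩

/-- If θ is a D-IFV and ζ > 0, then θ^{ζ_p} is again a D-IFV.
Real powers `x ^ ζ` are `Real.rpow`. -/
theorem dIFV_pow_p (μθ νθ rθ ζ : ℝ)
    (hμθ : μθ ∈ Set.Icc (0:ℝ) 1) (hνθ : νθ ∈ Set.Icc (0:ℝ) 1) (hθ : μθ + νθ ≤ 1)
    (hrθ : rθ ∈ Set.Icc (0:ℝ) (Real.sqrt 2)) (hζ : 0 < ζ) :
    μθ ^ ζ ∈ Set.Icc (0:ℝ) 1 ∧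
    (1 - (1 - νθ) ^ ζ) ∈ Set.Icc (0:ℝ) 1 ∧
    μθ ^ ζ + (1 - (1 - νθ) ^ ζ) ≤ 1 ∧
    (Real.sqrt 2 - Real.sqrt 2 * (1 - rθ / Real.sqrt 2) ^ ζ)
      ∈ Set.Icc (0:ℝ) (Real.sqrt 2) :=
  ⟨rpow_mem_Icc_zero_one hμθ hζ.le, one_sub_rpow_one_sub_mem_Icc hνθ hζ.le,
    rpow_add_one_sub_rpow_one_sub_le_one hμθ.1 hθ hζ.le,
    sub_mul_rpow_one_sub_div_mem_Icc (sqrt_nonneg 2) hrθ hζ.le⟩
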